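/- arXiv:2410.06275 — 5 statements merged into one kernel-verified Lean document; each statement's English description precedes it below -/
import Mathlib

section
/- If ⟨P_n : n < ω⟩ is a countable family of directed partial orders each of which is (ω₁, ω₁)-cohesive, then the product ∏_{n<ω} P_n (with coordinatewise order) is (ω₁, ω)-cohesive. -/
/-!
Let `p` be an `ω₁`-sequence in `∏ Pₙ`. Using `(ω₁, ω₁)`-cohesiveness of one factor at a time,
shrink the index set to a decreasing chain `C₀ ⊇ C₁ ⊇ ⋯` of sets of size `ℵ₁` such that the
`n`-th coordinates of `p` are bounded on `Cₙ`. A countably infinite pseudo-intersection `I` of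
the chain (`I \ Cₙ` finite for all `n`) does the job: in coordinate `n`, the points of `I ∩ Cₙ`
have a common bound, and the finitely many remaining ones can be absorbed by directedness.
-/

open Cardinal

/-- A directed poset is `(λ, μ)`-cohesive if every `λ`-sequence has a set of indices of
cardinality `μ` whose elements are bounded. -/
def Cohesive {α : Type*} [Preorder α] (lam mu : Cardinal) : Prop :=
  ∀ p : lam.ord.ToType → α, ∃ I : Set lam.ord.ToType, #I = mu ∧ ∃ b, ∀ i ∈ I, p i ≤ b

universe u v w

theorem Cohesive.exists_subset_bddAbove_image {α : Type u} [Preorder α] {κ : Cardinal.{v}}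
    (h : Cohesive (α := α) κ κ) {T : Type w} {s : Set T} (hs : lift.{v} #s = lift.{w} κ)
    (f : T → α) : ∃ t ⊆ s, lift.{v} #t = lift.{w} κ ∧ BddAbove (f '' t) := by
  obtain ⟨e⟩ : Nonempty (κ.ord.ToType ≃ s) :=
    lift_mk_eq'.mp (by rw [mk_ord_toType, hs])
  obtain ⟨I, hI, b, hb⟩ := h fun i => f (e i)
  have he : Function.Injective fun i => (e i : T) :=
    Subtype.val_injective.comp e.injective
  refine ⟨(fun i => (e i : T)) '' I, ?_, ?_, b, ?_⟩
  · rintro _ ⟨i, -, rfl⟩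
    exact (e i).2
  · rw [mk_image_eq_lift _ _ he, hI]
  · rintro _ ⟨_, ⟨i, hi, rfl⟩, rfl⟩
    exact hb i hi

theorem exists_antitone_seq_of_forall_exists_subset {T : Type*} (L : Set T → Prop)
    (Q : ℕ → Set T → Prop) (huniv : L Set.univ) (hstep : ∀ n s, L s → ∃ t ⊆ s, L t ∧ Q n t) :
    ∃ C : ℕ → Set T, Antitone C ∧ ∀ n, L (C n) ∧ Q n (C n) := by
  choose F hFsub hFL hFQ using hstep
  let C : ℕ → {s // L s} := fun n =>
    Nat.rec ⟨F 0 _ huniv, hFL 0 _ huniv⟩ (fun n s => ⟨F (n + 1) s.1 s.2, hFL _ _ s.2⟩) n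
  refine ⟨fun n => (C n).1, antitone_nat_of_succ_le fun n => hFsub _ _ (C n).2, fun n => ?_⟩
  cases n with
  | zero => exact ⟨(C 0).2, hFQ 0 _ huniv⟩
  | succ n => exact ⟨(C (n + 1)).2, hFQ _ _ (C n).2⟩

theorem exists_injective_forall_mem_of_antitone {T : Type*} {C : ℕ → Set T}
    (hC : Antitone C) (hinf : ∀ n, (C n).Infinite) :
    ∃ i : ℕ → T, Function.Injective i ∧ ∀ n, i n ∈ C n := by
  classical
  -- Enumerate pairs `(kₙ, xₙ)` with `xₙ ∈ C kₙ`; since `kₙ` increases, `n ≤ kₙ` and so `xₙ ∈ C n`.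
  obtain ⟨f, hfC, hf⟩ := exists_seq_of_forall_finset_exists
    (fun x : ℕ × T => x.2 ∈ C x.1) (fun x y => x.1 < y.1 ∧ x.2 ≠ y.2) fun s _ => by
      obtain ⟨y, hyC, hys⟩ :=
        ((hinf (s.sup Prod.fst + 1)).sdiff (s.image Prod.snd).finite_toSet).nonempty
      refine ⟨(s.sup Prod.fst + 1, y), hyC, fun x hx => ⟨Nat.lt_succ_of_le (s.le_sup hx), ?_⟩⟩
      rintro rfl
      exact hys (Finset.mem_image_of_mem _ hx)
  have hmono : StrictMono fun n => (f n).1 := fun m n hmn => (hf m n hmn).1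
  refine ⟨fun n => (f n).2, fun m n hmn => ?_, fun n => hC (hmono.id_le n) (hfC n)⟩
  by_contra hne
  rcases Nat.lt_or_gt_of_ne hne with hlt | hlt
  · exact (hf m n hlt).2 hmn
  · exact (hf n m hlt).2 hmn.symm

theorem exists_mk_eq_aleph0_forall_finite_diff_of_antitone {T : Type*} {C : ℕ → Set T}
    (hC : Antitone C) (hinf : ∀ n, (C n).Infinite) :
    ∃ I : Set T, #I = ℵ₀ ∧ ∀ n, (I \ C n).Finite := by
  obtain ⟨i, hi, hiC⟩ := exists_injective_forall_mem_of_antitone hC hinf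
  refine ⟨Set.range i, by simpa using mk_range_eq_of_injective hi,
    fun n => ((Set.finite_Iio n).image i).subset ?_⟩
  rintro _ ⟨⟨m, rfl⟩, hm⟩
  exact ⟨m, not_le.mp fun hnm => hm (hC hnm (hiC m)), rfl⟩

theorem bddAbove_image_of_finite_diff {T α : Type*} [Preorder α] [IsDirectedOrder α]
    {f : T → α} {I C : Set T} (hC : BddAbove (f '' C)) (hfin : (I \ C).Finite) :
    BddAbove (f '' I) := by
  have : Nonempty α := let ⟨b, _⟩ := hC; ⟨b⟩
  refine (hC.union (hfin.image f).bddAbove).mono ?_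
  rw [← Set.image_union]
  exact Set.image_mono fun x hx => (em (x ∈ C)).imp id fun hxC => ⟨hx, hxC⟩

/-- a countable product of `(ω₁, ω₁)`-cohesive directed posets is
`(ω₁, ω)`-cohesive (with the coordinatewise order). -/
theorem stmt_3 {P : ℕ → Type*} [∀ n, PartialOrder (P n)]
    (hdir : ∀ n, ∀ a b : P n, ∃ c, a ≤ c ∧ b ≤ c)
    (hcoh : ∀ n, Cohesive (α := P n) (Cardinal.aleph 1) (Cardinal.aleph 1)) :
    Cohesive (α := ∀ n, P n) (Cardinal.aleph 1) Cardinal.aleph0 := by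
  intro p
  have : ∀ n, IsDirectedOrder (P n) := fun n => ⟨hdir n⟩
  obtain ⟨C, hCanti, hC⟩ := exists_antitone_seq_of_forall_exists_subset _
    (fun n t => BddAbove ((p · n) '' t)) (by simp) fun n _ hs =>
      (hcoh n).exists_subset_bddAbove_image hs (p · n)
  have hCinf : ∀ n, (C n).Infinite := fun n => by
    rw [← Set.infinite_coe_iff, infinite_iff, ← aleph0_le_lift, (hC n).1]
    simp
  obtain ⟨I, hI, hfin⟩ := exists_mk_eq_aleph0_forall_finite_diff_of_antitone hCanti hCinf
  obtain ⟨b, hb⟩ := bddAbove_pi.mpr fun n => by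
    rw [Set.image_image]
    exact bddAbove_image_of_finite_diff (hC n).2 (hfin n)
  exact ⟨I, hI, b, fun i hi => hb (Set.mem_image_of_mem p hi)⟩
end

section
/- For any infinite cardinal λ and any ultrafilter U ordered by reverse inclusion, U fails to be (cf(λ), cf(λ))-cohesive if and only if (λ, <) ≤_T (U, ⊇). -/
open Cardinal

/-- An ultrafilter `U` is `(θ, θ)`-cohesive if every `θ`-family from `U` has a subfamily
of size `θ` whose intersection is in `U`. -/
def UCohesive {K : Type*} (U : Ultrafilter K) (lam mu : Cardinal) : Prop :=
  ∀ A : lam.ord.ToType → Set K, (∀ i, A i ∈ U) →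
    ∃ I : Set lam.ord.ToType, #I = mu ∧ (⋂ i ∈ I, A i) ∈ U

/-!
For a regular cardinal `κ`, a subset of `κ` is unbounded exactly when it has size `κ`, so a
witness to the failure of `(κ, κ)`-cohesiveness is literally a Tukey map `κ → (U, ⊇)`. Tukey maps
transfer in both directions along a strictly increasing cofinal map `cf λ → λ` (pulling back along
it, or along a choice of `g` with `b ≤ e (g b)`), and `cf λ` is regular for infinite `λ`.
-/

open Order Set

/-- Tukey maps `(α, ≤) → (U, ⊇)`. -/
def IsTukeyMap {α K : Type*} [Preorder α] (U : Ultrafilter K) (f : α → Set K) : Prop :=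
  (∀ i, f i ∈ U) ∧ ∀ A : Set α, ¬ BddAbove A → ¬ ∃ B ∈ U, ∀ i ∈ A, B ⊆ f i

section Tukey

variable {α β K : Type*} {U : Ultrafilter K}

theorem IsTukeyMap.comp [Preorder α] [Preorder β] {f : β → Set K} (hf : IsTukeyMap U f)
    {g : α → β} (hg : ∀ A : Set α, ¬ BddAbove A → ¬ BddAbove (g '' A)) :
    IsTukeyMap U (f ∘ g) := by
  refine ⟨fun i => hf.1 (g i), fun A hA ⟨B, hB, hBA⟩ => hf.2 _ (hg A hA) ⟨B, hB, ?_⟩⟩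
  rintro _ ⟨i, hi, rfl⟩
  exact hBA i hi

theorem StrictMono.not_bddAbove_image [LinearOrder α] [Preorder β] {e : α → β}
    (he : StrictMono e) (he' : IsCofinal (range e)) {A : Set α} (hA : ¬ BddAbove A) :
    ¬ BddAbove (e '' A) := by
  rintro ⟨b, hb⟩
  obtain ⟨_, ⟨a, rfl⟩, hba⟩ := he' b
  exact hA ⟨a, fun x hx => he.le_iff_le.1 ((hb (mem_image_of_mem e hx)).trans hba)⟩

theorem Monotone.not_bddAbove_image_of_le_apply [Preorder α] [Preorder β] {e : α → β}
    (he : Monotone e) {g : β → α} (hg : ∀ b, b ≤ e (g b)) {A : Set β} (hA : ¬ BddAbove A) :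
    ¬ BddAbove (g '' A) := by
  rintro ⟨a, ha⟩
  exact hA ⟨e a, fun b hb => (hg b).trans (he (ha (mem_image_of_mem g hb)))⟩

theorem exists_isTukeyMap_iff_of_strictMono [LinearOrder α] [Preorder β] {e : α → β}
    (he : StrictMono e) (he' : IsCofinal (range e)) :
    (∃ f : α → Set K, IsTukeyMap U f) ↔ ∃ f : β → Set K, IsTukeyMap U f := by
  constructor
  · rintro ⟨f, hf⟩
    have : ∀ b, ∃ a, b ≤ e a := fun b =>
      let ⟨_, ⟨a, ha⟩, hb⟩ := he' b
      ⟨a, ha ▸ hb⟩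
    choose g hg using this
    exact ⟨f ∘ g, hf.comp fun A => he.monotone.not_bddAbove_image_of_le_apply hg⟩
  · rintro ⟨f, hf⟩
    exact ⟨f ∘ e, hf.comp fun A => he.not_bddAbove_image he'⟩

end Tukey

theorem Ordinal.exists_strictMono_isCofinal_range (o : Ordinal) :
    ∃ e : o.cof.ord.ToType → o.ToType, StrictMono e ∧ IsCofinal (range e) := by
  obtain ⟨f, hf⟩ := exists_isFundamentalSeq (o := o) rfl
  refine ⟨ToType.mk ∘ f ∘ ToType.mk.symm,
    ToType.mk.strictMono.comp (hf.strictMono.comp ToType.mk.symm.strictMono), ?_⟩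
  rw [range_comp, range_comp, ToType.mk.symm.range_eq, image_univ]
  exact ToType.mk.map_isCofinal hf.isCofinal_range

theorem Cardinal.IsRegular.mk_eq_iff_not_bddAbove {c : Cardinal} (hc : c.IsRegular)
    {I : Set c.ord.ToType} : #I = c ↔ ¬ BddAbove I := by
  have := noMaxOrder hc.aleph0_le
  rw [← not_isCofinal_iff_bddAbove, not_not]
  refine ⟨fun hI => by_contra fun hI' => ?_, fun hI => ?_⟩
  · obtain ⟨x, hx⟩ := not_isCofinal_iff.1 hI'
    have hIx : #I < c := calc
      #I ≤ #(Iio x) := mk_le_mk_of_subset hx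
      _ < #c.ord.ToType := mk_Iio_lt x (by rw [mk_ord_toType, Ordinal.type_toType])
      _ = c := mk_ord_toType c
    exact hIx.ne hI
  · refine le_antisymm ?_ ?_
    · simpa using mk_le_mk_of_subset (subset_univ I)
    · simpa [hc.cof_ord] using cof_le hI

theorem not_uCohesive_iff_exists_isTukeyMap {K : Type*} (U : Ultrafilter K) {c : Cardinal}
    (hc : c.IsRegular) : ¬ UCohesive U c c ↔ ∃ f : c.ord.ToType → Set K, IsTukeyMap U f := by
  simp only [UCohesive, IsTukeyMap, hc.mk_eq_iff_not_bddAbove, ← subset_iInter₂_iff,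
    ← Ultrafilter.mem_coe, Filter.exists_mem_subset_iff]
  push Not
  rfl

/-- for an infinite cardinal `λ`, `U` is not `(cf λ, cf λ)`-cohesive iff
`(λ, <) ≤_T (U, ⊇)`, i.e. there is a Tukey (unbounded) map from the ordinals below `λ`
into `U` ordered by reverse inclusion. -/
theorem stmt_5 {K : Type*} (U : Ultrafilter K) (lam : Cardinal) (hlam : Cardinal.aleph0 ≤ lam) :
    ¬ UCohesive U lam.ord.cof lam.ord.cof ↔
      ∃ f : lam.ord.ToType → Set K, (∀ i, f i ∈ U) ∧
        ∀ A : Set lam.ord.ToType, ¬ BddAbove A → ¬ ∃ B ∈ U, ∀ i ∈ A, B ⊆ f i := by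
  obtain ⟨e, he, he'⟩ := Ordinal.exists_strictMono_isCofinal_range lam.ord
  rw [not_uCohesive_iff_exists_isTukeyMap U (isRegular_cof (isSuccLimit_ord hlam))]
  exact exists_isTukeyMap_iff_of_strictMono he he'
end

section
/- Let U be a uniform ultrafilter over a cardinal κ with character θ = ch(U), the least cardinality of a base of U. Then (θ, <) ≤_T (U, ⊇); equivalently, U is not (cf(θ), cf(θ))-cohesive. -/
/-!
Enumerate a base of minimal size `θ` in order type `θ`. No initial segment of the enumeration
is a base, having fewer than `θ` members, so for every `α < θ` some `f α ∈ U` contains none of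
the sets enumerated before `α`. A set `X ∈ U` below `f α` for unboundedly many `α` would contain
some member `b_β` of the base, and then `b_β ⊆ X ⊆ f α` for some `α > β`, a contradiction.
-/

open Cardinal

namespace Filter

variable {K : Type*}

def IsGeneratingFamily (U : Filter K) (B : Set (Set K)) : Prop :=
  (∀ b ∈ B, b ∈ U) ∧ ∀ X ∈ U, ∃ b ∈ B, b ⊆ X

theorem exists_mem_forall_not_subset_of_mk_lt {U : Filter K} {θ : Cardinal}
    (hθ : θ ∈ lowerBounds {c | ∃ B, U.IsGeneratingFamily B ∧ #B = c})
    {S : Set (Set K)} (hSU : ∀ s ∈ S, s ∈ U) (hS : #S < θ) :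
    ∃ X ∈ U, ∀ s ∈ S, ¬ s ⊆ X := by
  by_contra! h
  exact (hθ ⟨S, ⟨hSU, h⟩, rfl⟩).not_gt hS

theorem not_exists_mem_subset_of_not_bddAbove {ι : Type*} [LinearOrder ι] {U : Filter K}
    {e f : ι → Set K} (he : ∀ X ∈ U, ∃ i, e i ⊆ X) (hf : ∀ α, ∀ β < α, ¬ e β ⊆ f α)
    {A : Set ι} (hA : ¬ BddAbove A) : ¬ ∃ X ∈ U, ∀ i ∈ A, X ⊆ f i := by
  rintro ⟨X, hXU, hXf⟩
  obtain ⟨β, hβ⟩ := he X hXU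
  obtain ⟨α, hαA, hβα⟩ := not_bddAbove_iff.mp hA β
  exact hf α β hβα (hβ.trans (hXf α hαA))

end Filter

open Filter

theorem stmt_6_general {K : Type*} (U : Ultrafilter K)
    (theta : Cardinal)
    (htheta : IsLeast {c : Cardinal |
      ∃ B : Set (Set K), (∀ b ∈ B, b ∈ U) ∧ (∀ X ∈ U, ∃ b ∈ B, b ⊆ X) ∧ #B = c} theta) :
    ∃ f : theta.ord.ToType → Set K, (∀ i, f i ∈ U) ∧
      ∀ A : Set theta.ord.ToType, ¬ BddAbove A → ¬ ∃ B ∈ U, ∀ i ∈ A, B ⊆ f i := by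
  obtain ⟨⟨B, hBU, hBbase, hBcard⟩, hmin⟩ := htheta
  obtain ⟨enum⟩ := Cardinal.eq.mp (by rw [mk_ord_toType, hBcard] : #theta.ord.ToType = #B)
  let e i : Set K := enum i
  have hseg (α : theta.ord.ToType) : ∃ X ∈ U, ∀ β < α, ¬ e β ⊆ X := by
    obtain ⟨X, hXU, hX⟩ := exists_mem_forall_not_subset_of_mk_lt (U := (U : Filter K))
      (S := e '' Set.Iio α) (fun c ⟨B', hB', hc⟩ => hmin ⟨B', hB'.1, hB'.2, hc⟩)
      (by rintro _ ⟨β, -, rfl⟩; exact hBU _ (enum β).2)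
      (mk_image_le.trans_lt (by simpa using mk_Iio_lt α))
    exact ⟨X, hXU, fun β hβ => hX _ ⟨β, hβ, rfl⟩⟩
  choose f hfU hf using hseg
  refine ⟨f, hfU, fun A hA => not_exists_mem_subset_of_not_bddAbove (U := (U : Filter K)) ?_ hf hA⟩
  intro X hX
  obtain ⟨b, hbB, hbX⟩ := hBbase X hX
  exact ⟨enum.symm ⟨b, hbB⟩, by simpa [e] using hbX⟩

/-- if `U` is a uniform ultrafilter and `θ = ch(U)` is its character
(the least cardinality of a base of `U`), then `(θ, <) ≤_T (U, ⊇)`: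
there is a Tukey (unbounded) map from the ordinals below `θ` into `(U, ⊇)`. -/
theorem stmt_6 {K : Type*} (U : Ultrafilter K)
    (huniform : ∀ X ∈ U, #X = #K)
    (theta : Cardinal)
    (htheta : IsLeast {c : Cardinal |
      ∃ B : Set (Set K), (∀ b ∈ B, b ∈ U) ∧ (∀ X ∈ U, ∃ b ∈ B, b ⊆ X) ∧ #B = c} theta) :
    ∃ f : theta.ord.ToType → Set K, (∀ i, f i ∈ U) ∧
      ∀ A : Set theta.ord.ToType, ¬ BddAbove A → ¬ ∃ B ∈ U, ∀ i ∈ A, B ⊆ f i :=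
  stmt_6_general U theta htheta
end

section
/- If 2^κ = κ⁺, then no uniform ultrafilter on κ is (κ⁺, κ⁺)-cohesive. -/
/-!
Enumerate the subsets of `κ` in order type `κ⁺` (possible since `2^κ = κ⁺`). For each `α < κ⁺`
the at most `κ` sets of size `κ` enumerated up to `α` admit an injective choice of two points
from each; the two resulting disjoint transversals cannot both lie in `U`, so the complement of
one of them is a set `A α ∈ U` containing none of these sets. If `κ⁺` many `A α` had
intersection `Y ∈ U`, then `Y` has size `κ` by uniformity, is enumerated at some stage, and
the indices are unbounded, so some `A α` with `α` beyond that stage contains `Y`.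
-/

open Cardinal

open Set

universe u

theorem exists_injective_forall_mem_of_mk_Iio_lt {ι α : Type u} [LinearOrder ι]
    [WellFoundedLT ι] (s : ι → Set α) (hs : ∀ i, #(Iio i) < #(s i)) :
    ∃ f : ι → α, Function.Injective f ∧ ∀ i, f i ∈ s i := by
  have hfresh : ∀ i (prev : ∀ j, j < i → α),
      (s i \ range fun j : Iio i => prev j j.2).Nonempty := fun i prev =>
    sdiff_nonempty_of_mk_lt_mk (mk_range_le.trans_lt (hs i))
  let f : ι → α := WellFoundedLT.fix fun i prev => (hfresh i prev).some
  have hf : ∀ i, f i ∈ s i \ range fun j : Iio i => f j := fun i => by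
    rw [show f i = (hfresh i fun j _ => f j).some from WellFoundedLT.fix_eq _ i]
    exact (hfresh i fun j _ => f j).some_mem
  refine ⟨f, fun i j hij => ?_, fun i => (hf i).1⟩
  rcases lt_trichotomy i j with h | h | h
  · exact absurd ⟨⟨i, h⟩, hij⟩ (hf j).2
  · exact h
  · exact absurd ⟨⟨j, h⟩, hij.symm⟩ (hf i).2

theorem exists_injective_forall_mem_of_mk_le {ι α : Type u} {c : Cardinal} (hι : #ι ≤ c)
    (s : ι → Set α) (hs : ∀ i, c ≤ #(s i)) :
    ∃ f : ι → α, Function.Injective f ∧ ∀ i, f i ∈ s i := by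
  obtain ⟨_, _, hord⟩ := exists_ord_eq_type_lt ι
  exact exists_injective_forall_mem_of_mk_Iio_lt s fun i =>
    (mk_Iio_lt i hord).trans_le (hι.trans (hs i))

theorem Ultrafilter.exists_mem_forall_not_subset {α : Type u} (U : Ultrafilter α)
    {𝒮 : Set (Set α)} {c : Cardinal} (hc : ℵ₀ ≤ c) (h𝒮 : #𝒮 ≤ c)
    (hs : ∀ s ∈ 𝒮, c ≤ #s) : ∃ A ∈ U, ∀ s ∈ 𝒮, ¬ s ⊆ A := by
  have hsum : #(𝒮 ⊕ 𝒮) ≤ c := by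
    rw [mk_sum, lift_id, ← add_eq_self hc]
    exact add_le_add h𝒮 h𝒮
  obtain ⟨f, hf, hfs⟩ := exists_injective_forall_mem_of_mk_le hsum
    (fun x => x.elim Subtype.val Subtype.val) (Sum.rec (fun s => hs s s.2) (fun s => hs s s.2))
  have hdisj : Disjoint (range (f ∘ Sum.inl)) (range (f ∘ Sum.inr)) :=
    disjoint_range_iff.2 fun _ _ h => Sum.inl_ne_inr (hf h)
  have of_transversal : ∀ g : 𝒮 → α, (∀ s : 𝒮, g s ∈ (s : Set α)) → (range g)ᶜ ∈ U →
      ∃ A ∈ U, ∀ s ∈ 𝒮, ¬ s ⊆ A := fun g hg hU =>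
    ⟨_, hU, fun s hs hsub => hsub (hg ⟨s, hs⟩) ⟨⟨s, hs⟩, rfl⟩⟩
  by_cases hinl : range (f ∘ Sum.inl) ∈ U
  · exact of_transversal _ (fun s => hfs (Sum.inr s))
      (U.mem_of_superset hinl hdisj.subset_compl_right)
  · exact of_transversal _ (fun s => hfs (Sum.inl s)) (U.compl_mem_iff_notMem.2 hinl)

theorem exists_mem_le_of_mk_Iio_lt {ι : Type u} [LinearOrder ι] {I : Set ι} {β : ι}
    (h : #(Iio β) < #I) : ∃ α ∈ I, β ≤ α := by
  by_contra! hI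
  exact (mk_le_mk_of_subset hI).not_gt h

theorem mk_Iic_toType_ord_succ_le {κ : Cardinal} (hκ : ℵ₀ ≤ κ) (α : (Order.succ κ).ord.ToType) :
    #(Iic α) ≤ κ := by
  refine Order.lt_succ_iff.1 ?_
  simpa using mk_Iic_lt α (by simp) (by simpa using hκ.trans (Order.le_succ κ))

/-- Kanamori: if `2^κ = κ⁺`, then no uniform ultrafilter on `κ` is
`(κ⁺, κ⁺)`-cohesive. -/
theorem stmt_7 {K : Type*} (hK : Cardinal.aleph0 ≤ #K)
    (hGCH : (2 : Cardinal) ^ #K = Order.succ #K)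
    (U : Ultrafilter K) (huniform : ∀ X ∈ U, #X = #K) :
    ¬ UCohesive U (Order.succ #K) (Order.succ #K) := by
  intro hcoh
  obtain ⟨e⟩ : Nonempty (Set K ↪ (Order.succ #K).ord.ToType) := by
    rw [← le_def, mk_set, hGCH, mk_ord_toType]
  let enumeratedBy (α) : Set (Set K) := {X | #X = #K ∧ e X ≤ α}
  have hcard (α) : #(enumeratedBy α) ≤ #K := calc
    #(enumeratedBy α) = #(e '' enumeratedBy α) := (mk_image_eq e.injective).symm
    _ ≤ #(Iic α) := mk_le_mk_of_subset (image_subset_iff.2 fun _ hX => hX.2)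
    _ ≤ #K := mk_Iic_toType_ord_succ_le hK α
  choose A hAU hA using fun α =>
    U.exists_mem_forall_not_subset hK (hcard α) fun _ hX => hX.1.ge
  obtain ⟨I, hI, hIU⟩ := hcoh A hAU
  obtain ⟨α, hαI, hα⟩ := exists_mem_le_of_mk_Iio_lt (I := I) (β := e (⋂ i ∈ I, A i))
    (by simpa [hI] using mk_Iio_lt (e _) (by simp))
  exact hA α _ ⟨huniform _ hIU, hα⟩ (biInter_subset_of_mem hαI)
end

section
/- Suppose U is a uniform ultrafilter on κ with dp(U) = ch(U) = λ, i.e., the depth of U equals its character. Then U has a strong generating sequence of length λ. -/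
/-!
Enumerate a base of `U` as `⟨b i : i < λ⟩` and build `A i ⊆ b i` by transfinite recursion.
At stage `i` the sequence `⟨A j : j < i⟩` is `⊆*`-decreasing; restricted to a cofinal subsequence
of regular length `cof i ≤ |i| < λ = dp(U)` it has a pseudo-intersection `P ∈ U`, and
`A i := P ∩ b i` continues the sequence. Every `X ∈ U` contains some `b i ⊇ A i`.
-/

open Cardinal

/-- `A ⊆* B` : `A \ B` is bounded. -/
def AlmostSub {K : Type*} [LinearOrder K] (A B : Set K) : Prop := BddAbove (A \ B)

open Set Order

theorem Order.exists_strictMono_isCofinal_range (α : Type*) [LinearOrder α] [WellFoundedLT α] :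
    ∃ g : (cof α).ord.ToType → α, StrictMono g ∧ IsCofinal (range g) := by
  obtain ⟨s, hs, hs'⟩ := Ordinal.exists_ord_cof_eq α
  rw [← Ordinal.type_toType (cof α).ord, Ordinal.type_eq] at hs'
  obtain ⟨e⟩ := hs'
  let e' : s ≃o (cof α).ord.ToType := OrderIso.ofRelIsoLT e
  refine ⟨Subtype.val ∘ e'.symm, (Subtype.strictMono_coe _).comp e'.symm.strictMono, ?_⟩
  rwa [range_comp, e'.symm.range_eq, image_univ, Subtype.range_coe]

theorem Order.isRegular_cof (α : Type*) [LinearOrder α] [WellFoundedLT α] [Nonempty α]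
    [NoMaxOrder α] : (cof α).IsRegular :=
  ⟨aleph0_le_cof, (cof_ord_cof α).ge⟩

theorem Cardinal.exists_range_eq_of_mk_eq {α : Type*} {s : Set α} {c : Cardinal} (h : #s = c) :
    ∃ f : c.ord.ToType → α, range f = s := by
  obtain ⟨e⟩ := Cardinal.eq.mp (show #c.ord.ToType = #s by simp [h])
  exact ⟨Subtype.val ∘ e, by rw [range_comp, e.range_eq_univ, image_univ, Subtype.range_coe]⟩

section AlmostSub

variable {K : Type*} [LinearOrder K] {A A' B C : Set K}

theorem almostSub_of_subset [Nonempty K] (h : A ⊆ B) : AlmostSub A B := by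
  rw [AlmostSub, sdiff_eq_empty.mpr h]
  exact bddAbove_empty

theorem AlmostSub.mono_left (h : A ⊆ A') (h' : AlmostSub A' B) : AlmostSub A B :=
  h'.mono (sdiff_subset_sdiff_left h)

theorem AlmostSub.trans (hAB : AlmostSub A B) (hBC : AlmostSub B C) : AlmostSub A C :=
  (hAB.union hBC).mono fun x hx ↦ by
    by_cases hB : x ∈ B
    · exact .inr ⟨hB, hx.2⟩
    · exact .inl ⟨hx.1, hB⟩

def AlmostAntitone {ι : Type*} [Preorder ι] (A : ι → Set K) : Prop :=
  ∀ i j, i < j → AlmostSub (A j) (A i)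

def IsPseudoIntersection {ι : Type*} (P : Set K) (A : ι → Set K) : Prop :=
  ∀ i, AlmostSub P (A i)

def HasPseudoIntersections (U : Filter K) (ι : Type*) [Preorder ι] : Prop :=
  ∀ A : ι → Set K, (∀ i, A i ∈ U) → AlmostAntitone A → ∃ P ∈ U, IsPseudoIntersection P A

theorem AlmostAntitone.almostSub_of_le [Nonempty K] {ι : Type*} [PartialOrder ι] {A : ι → Set K}
    (hA : AlmostAntitone A) {i j : ι} (hij : i ≤ j) : AlmostSub (A j) (A i) := by
  rcases hij.eq_or_lt with rfl | hlt
  · exact almostSub_of_subset subset_rfl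
  · exact hA i j hlt

theorem AlmostAntitone.comp_strictMono {ι κ : Type*} [Preorder ι] [Preorder κ] {A : ι → Set K}
    (hA : AlmostAntitone A) {g : κ → ι} (hg : StrictMono g) : AlmostAntitone (A ∘ g) :=
  fun _ _ hkl ↦ hA _ _ (hg hkl)

theorem AlmostAntitone.isPseudoIntersection_of_isCofinal [Nonempty K] {ι κ : Type*}
    [PartialOrder ι] {A : ι → Set K} (hA : AlmostAntitone A) {g : κ → ι}
    (hg : IsCofinal (range g)) {P : Set K} (hP : IsPseudoIntersection P (A ∘ g)) :
    IsPseudoIntersection P A := fun i ↦ by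
  obtain ⟨_, ⟨k, rfl⟩, hik⟩ := hg i
  exact (hP k).trans (hA.almostSub_of_le hik)

theorem HasPseudoIntersections.of_strictMono_isCofinal [Nonempty K] {U : Filter K}
    {ι κ : Type*} [PartialOrder ι] [Preorder κ] (h : HasPseudoIntersections U κ) {g : κ → ι}
    (hg : StrictMono g) (hg' : IsCofinal (range g)) : HasPseudoIntersections U ι := by
  intro A hAU hA
  obtain ⟨P, hPU, hP⟩ := h (A ∘ g) (fun k ↦ hAU (g k)) (hA.comp_strictMono hg)
  exact ⟨P, hPU, hA.isPseudoIntersection_of_isCofinal hg' hP⟩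

theorem HasPseudoIntersections.of_cof [Nonempty K] {U : Filter K} {α : Type*} [LinearOrder α]
    [WellFoundedLT α] (h : (cof α).IsRegular → HasPseudoIntersections U (cof α).ord.ToType) :
    HasPseudoIntersections U α := by
  intro A hAU hA
  rcases isEmpty_or_nonempty α with _ | _
  · exact ⟨univ, Filter.univ_mem, isEmptyElim⟩
  by_cases htop : ∃ m : α, IsTop m
  · obtain ⟨m, hm⟩ := htop
    exact ⟨A m, hAU m, fun i ↦ hA.almostSub_of_le (hm i)⟩
  · have : NoMaxOrder α := ⟨by simpa [IsTop] using htop⟩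
    obtain ⟨g, hg, hg'⟩ := exists_strictMono_isCofinal_range α
    exact (h (Order.isRegular_cof α)).of_strictMono_isCofinal hg hg' A hAU hA

theorem exists_almostAntitone_subset {U : Filter K} {ι : Type*} [LinearOrder ι] [WellFoundedLT ι]
    (h : ∀ i : ι, HasPseudoIntersections U (Iio i)) (b : ι → Set K) (hb : ∀ i, b i ∈ U) :
    ∃ A : ι → Set K, (∀ i, A i ∈ U) ∧ AlmostAntitone A ∧ ∀ i, A i ⊆ b i := by
  let A : ι → Set K := WellFoundedLT.fix fun i rec ↦
    Classical.epsilon (fun P ↦ P ∈ U ∧ ∀ j (hj : j < i), AlmostSub P (rec j hj)) ∩ b i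
  have hA : ∀ i, A i = Classical.epsilon (fun P ↦ P ∈ U ∧ ∀ j < i, AlmostSub P (A j)) ∩ b i :=
    WellFoundedLT.fix_eq _
  have key : ∀ i, A i ∈ U ∧ ∀ j < i, AlmostSub (A i) (A j) := by
    intro i
    induction i using WellFoundedLT.induction with
    | ind i IH =>
      obtain ⟨P, hPU, hP⟩ := h i (fun j ↦ A j) (fun j ↦ (IH j j.2).1)
        (fun j k hjk ↦ (IH k k.2).2 j hjk)
      have hε := Classical.epsilon_spec (p := fun P ↦ P ∈ U ∧ ∀ j < i, AlmostSub P (A j))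
        ⟨P, hPU, fun j hj ↦ hP ⟨j, hj⟩⟩
      rw [hA i]
      exact ⟨Filter.inter_mem hε.1 (hb i), fun j hj ↦ (hε.2 j hj).mono_left inter_subset_left⟩
  exact ⟨A, fun i ↦ (key i).1, fun i j hij ↦ (key j).2 i hij,
    fun i ↦ (hA i).symm ▸ inter_subset_right⟩

end AlmostSub

theorem stmt_13_general (kappa lam : Cardinal)
    (U : Ultrafilter kappa.ord.ToType)
    (hch : IsLeast {c : Cardinal | ∃ B : Set (Set kappa.ord.ToType),
      (∀ b ∈ B, b ∈ U) ∧ (∀ X ∈ U, ∃ b ∈ B, b ⊆ X) ∧ #B = c} lam)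
    (hdp : IsLeast {theta : Cardinal | theta.IsRegular ∧
      ∃ B : theta.ord.ToType → Set kappa.ord.ToType, (∀ i, B i ∈ U) ∧
        (∀ i j : theta.ord.ToType, i < j → AlmostSub (B j) (B i)) ∧
        ¬ ∃ P ∈ U, ∀ i, AlmostSub P (B i)} lam) :
    ∃ A : lam.ord.ToType → Set kappa.ord.ToType, (∀ i, A i ∈ U) ∧
      (∀ i j : lam.ord.ToType, i < j → AlmostSub (A j) (A i)) ∧
      ∀ X ∈ U, ∃ i, AlmostSub (A i) X := by
  have : Nonempty kappa.ord.ToType := U.neBot.nonempty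
  obtain ⟨B, hBU, hBbase, hBcard⟩ := hch.1
  obtain ⟨b, rfl⟩ := exists_range_eq_of_mk_eq hBcard
  have hshort : ∀ θ < lam, θ.IsRegular → HasPseudoIntersections U.toFilter θ.ord.ToType :=
    fun θ hθ hreg A hAU hA ↦ by
      by_contra hno
      exact (hdp.2 ⟨hreg, A, hAU, hA, hno⟩).not_gt hθ
  have hinit : ∀ i : lam.ord.ToType, HasPseudoIntersections U.toFilter (Iio i) := fun i ↦
    .of_cof fun hreg ↦ hshort _ ((cof_le_cardinalMk _).trans_lt (by simpa using mk_Iio_lt i)) hreg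
  obtain ⟨A, hAU, hA, hAb⟩ := exists_almostAntitone_subset hinit b fun i ↦ hBU _ (mem_range_self i)
  refine ⟨A, hAU, hA, fun X hX ↦ ?_⟩
  obtain ⟨_, ⟨i, rfl⟩, hi⟩ := hBbase X hX
  exact ⟨i, almostSub_of_subset ((hAb i).trans hi)⟩

/-- if `U` is a uniform ultrafilter on `κ` with `dp(U) = ch(U) = λ`, then
`U` has a strong generating sequence of length `λ`. -/
theorem stmt_13 (kappa lam : Cardinal) (hkappa : Cardinal.aleph0 ≤ kappa)
    (U : Ultrafilter kappa.ord.ToType)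
    (huniform : ∀ X ∈ U, #X = kappa)
    (hch : IsLeast {c : Cardinal | ∃ B : Set (Set kappa.ord.ToType),
      (∀ b ∈ B, b ∈ U) ∧ (∀ X ∈ U, ∃ b ∈ B, b ⊆ X) ∧ #B = c} lam)
    (hdp : IsLeast {theta : Cardinal | theta.IsRegular ∧
      ∃ B : theta.ord.ToType → Set kappa.ord.ToType, (∀ i, B i ∈ U) ∧
        (∀ i j : theta.ord.ToType, i < j → AlmostSub (B j) (B i)) ∧
        ¬ ∃ P ∈ U, ∀ i, AlmostSub P (B i)} lam) :
    ∃ A : lam.ord.ToType → Set kappa.ord.ToType, (∀ i, A i ∈ U) ∧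
      (∀ i j : lam.ord.ToType, i < j → AlmostSub (A j) (A i)) ∧
      ∀ X ∈ U, ∃ i, AlmostSub (A i) X :=
  stmt_13_general kappa lam U hch hdp
end
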